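/- arXiv:1603.00759 — 2 statements merged into one kernel-verified Lean document; each statement's English description precedes it below -/
import Mathlib

section
/- Let 0 = v₀ ≤ v₁ ≤ ⋯ ≤ v_m be vectors in ℝⁿ with nonnegative entries that are coordinatewise nondecreasing (each v_{i+1} - v_i has nonnegative coordinates) and ‖v_m‖₂ ≤ 1. Then for every ε > 0 there exists a subset S ⊆ {v₀,…,v_m} with |S| ≤ 1/ε² + 1 such that for every i there is u ∈ S with ‖v_i - u‖₂ ≤ ε (S is an ε-net of the chain in the ℓ₂ metric). -/
theorem stmt_3 (n m : ℕ) (v : Fin (m + 1) → Fin n → ℝ)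
    (hv0 : v 0 = 0)
    (hmono : ∀ i : Fin m, ∀ j : Fin n, v i.castSucc j ≤ v i.succ j)
    (hnorm : Real.sqrt (∑ j, v (Fin.last m) j ^ 2) ≤ 1)
    (ε : ℝ) (hε : 0 < ε) :
    ∃ S : Finset (Fin n → ℝ),
      (∀ u ∈ S, ∃ i, u = v i) ∧
      (S.card : ℝ) ≤ 1 / ε ^ 2 + 1 ∧
      ∀ i, ∃ u ∈ S, Real.sqrt (∑ j, (v i j - u j) ^ 2) ≤ ε := by
  set g : Fin (m+1) → ℝ := fun i => ∑ j, v i j ^ 2 with hg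
  have hvm : ∀ j, Monotone fun i : Fin (m+1) => v i j := by
    intro j
    rw [Fin.monotone_iff_le_succ]
    intro i; exact hmono i j
  have hvnn : ∀ i j, 0 ≤ v i j := by
    intro i j
    have := hvm j (Fin.zero_le i)
    simpa [hv0] using this
  have hgnn : ∀ i, 0 ≤ g i := fun i => Finset.sum_nonneg fun j _ => sq_nonneg _
  have hgm : g (Fin.last m) ≤ 1 := by
    have h1 := Real.sq_sqrt (hgnn (Fin.last m))
    nlinarith [Real.sqrt_nonneg (g (Fin.last m))]
  have hkey : ∀ i t : Fin (m+1), i ≤ t →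
      ∑ j, (v t j - v i j) ^ 2 ≤ g t - g i := by
    intro i t hit
    have hpt : ∀ j : Fin n, (v t j - v i j) ^ 2 ≤ v t j ^ 2 - v i j ^ 2 := by
      intro j
      have h1 := hvm j hit
      have h2 := hvnn i j
      nlinarith
    calc ∑ j, (v t j - v i j) ^ 2 ≤ ∑ j, (v t j ^ 2 - v i j ^ 2) :=
          Finset.sum_le_sum fun j _ => hpt j
      _ = g t - g i := by rw [Finset.sum_sub_distrib]
  have hgmono : ∀ i t : Fin (m+1), i ≤ t → g i ≤ g t := by
    intro i t hit
    have h1 := hkey i t hit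
    have h2 : (0:ℝ) ≤ ∑ j, (v t j - v i j) ^ 2 :=
      Finset.sum_nonneg fun j _ => sq_nonneg _
    linarith
  -- the level sets
  set A : ℕ → Finset (Fin (m+1)) :=
    fun k => Finset.univ.filter (fun t => (k:ℝ) * ε ^ 2 ≤ g t) with hA
  set r : ℕ → Fin (m+1) := fun k => if h : (A k).Nonempty then (A k).min' h else 0 with hr
  refine ⟨(Finset.range (⌊1 / ε ^ 2⌋₊ + 1)).image (fun k => v (r k)), ?_, ?_, ?_⟩
  · intro u hu
    rcases Finset.mem_image.mp hu with ⟨k, _, hk⟩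
    exact ⟨r k, hk.symm⟩
  · calc ((Finset.range (⌊1 / ε ^ 2⌋₊ + 1)).image (fun k => v (r k)) |>.card : ℝ)
        ≤ ((Finset.range (⌊1 / ε ^ 2⌋₊ + 1)).card : ℝ) := by
          exact_mod_cast Finset.card_image_le
      _ = (⌊1 / ε ^ 2⌋₊ : ℝ) + 1 := by simp
      _ ≤ 1 / ε ^ 2 + 1 := by
          have : (⌊1 / ε ^ 2⌋₊ : ℝ) ≤ 1 / ε ^ 2 := Nat.floor_le (by positivity)
          linarith
  · intro i
    have hε2 : (0:ℝ) < ε ^ 2 := by positivity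
    set k := ⌊g i / ε ^ 2⌋₊ with hkdef
    have hgi1 : g i ≤ 1 := le_trans (hgmono i (Fin.last m) (Fin.le_last i)) hgm
    have hk1 : (k:ℝ) * ε ^ 2 ≤ g i := by
      have h1 : (k:ℝ) ≤ g i / ε ^ 2 := Nat.floor_le (by positivity)
      calc (k:ℝ) * ε ^ 2 ≤ (g i / ε ^ 2) * ε ^ 2 := by nlinarith
        _ = g i := by field_simp
    have hk2 : g i < ((k:ℝ) + 1) * ε ^ 2 := by
      have h1 : g i / ε ^ 2 < (k:ℝ) + 1 := Nat.lt_floor_add_one _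
      calc g i = (g i / ε ^ 2) * ε ^ 2 := by field_simp
        _ < ((k:ℝ) + 1) * ε ^ 2 := by nlinarith
    have hiA : i ∈ A k := by
      simp only [hA, Finset.mem_filter, Finset.mem_univ, true_and]
      exact hk1
    have hne : (A k).Nonempty := ⟨i, hiA⟩
    have hrk : r k = (A k).min' hne := by simp [hr, hne]
    have hrki : r k ≤ i := by rw [hrk]; exact Finset.min'_le _ _ hiA
    have hrkA : r k ∈ A k := by rw [hrk]; exact Finset.min'_mem _ _
    have hgrk : (k:ℝ) * ε ^ 2 ≤ g (r k) := by
      simpa [hA, Finset.mem_filter] using hrkA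
    have hkrange : k ∈ Finset.range (⌊1 / ε ^ 2⌋₊ + 1) := by
      rw [Finset.mem_range, Nat.lt_succ_iff]
      exact Nat.floor_le_floor (by gcongr)
    refine ⟨v (r k), Finset.mem_image_of_mem _ hkrange, ?_⟩
    have hdist : ∑ j, (v i j - v (r k) j) ^ 2 ≤ ε ^ 2 := by
      have h1 := hkey (r k) i hrki
      linarith
    calc Real.sqrt (∑ j, (v i j - v (r k) j) ^ 2) ≤ Real.sqrt (ε ^ 2) :=
          Real.sqrt_le_sqrt hdist
      _ = ε := Real.sqrt_sq hε.le
end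

section
/- Let f^{(u)}, f^{(v)} ∈ ℤ≥0ⁿ be frequency vectors of an insertion-only stream at times u ≤ v, and H ∈ [n]. If ‖f^{(v)}‖₂ - ‖f^{(u)}‖₂ ≥ α√F₂ (where F₂ = ‖f^{(m)}‖₂² for the final frequency vector, v ≤ m) and f_H ≥ K√(F₂ - f_H²) with K·α ≥ 2, then the increment frequency satisfies f_H^{(u:v)} ≥ (Kα/2)·√(F₂ - f_H²), i.e., on the interval (u,v] the item H has frequency at least (Kα/2) times the ℓ₂ norm of the non-H tail. -/
/-!
Write `g = f⁽ᵛ⁾ - f⁽ᵘ⁾` for the increment. By the reverse triangle inequality the growth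
`α √F₂ ≤ ‖f⁽ᵛ⁾‖₂ - ‖f⁽ᵘ⁾‖₂` is at most `‖g‖₂`, and since `0 ≤ g ≤ f⁽ᵐ⁾` coordinatewise,
`‖g‖₂ ≤ g_H + T` with `T = √(F₂ - f_H²)`. Heaviness gives `K α T ≤ α f_H ≤ α √F₂`, hence
`g_H ≥ (K α - 1) T ≥ (K α / 2) T` because `K α ≥ 2`.
-/

open Finset

variable {ι : Type*} [Fintype ι]

lemma sqrt_sum_sq_eq_norm_toLp (x : ι → ℝ) :
    √(∑ i, x i ^ 2) = ‖WithLp.toLp 2 x‖ := by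
  simp only [EuclideanSpace.norm_eq, Real.norm_eq_abs, sq_abs]

lemma sqrt_sum_sq_sub_sqrt_sum_sq_le (x y : ι → ℝ) :
    √(∑ i, x i ^ 2) - √(∑ i, y i ^ 2) ≤ √(∑ i, (x i - y i) ^ 2) := by
  have := norm_sub_norm_le (WithLp.toLp 2 x) (WithLp.toLp 2 y)
  rwa [← WithLp.toLp_sub, ← sqrt_sum_sq_eq_norm_toLp, ← sqrt_sum_sq_eq_norm_toLp,
    ← sqrt_sum_sq_eq_norm_toLp] at this

lemma sq_le_sum_sq (x : ι → ℝ) (j : ι) : x j ^ 2 ≤ ∑ i, x i ^ 2 :=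
  single_le_sum (fun i _ ↦ sq_nonneg (x i)) (mem_univ j)

lemma sum_sq_sub_sq_le_of_abs_le [DecidableEq ι] {x y : ι → ℝ} (hxy : ∀ i, |x i| ≤ |y i|)
    (j : ι) : ∑ i, x i ^ 2 - x j ^ 2 ≤ ∑ i, y i ^ 2 - y j ^ 2 := by
  simp only [← sum_erase_eq_sub (mem_univ j)]
  exact sum_le_sum fun i _ ↦ sq_le_sq.mpr (hxy i)

lemma sqrt_add_le_abs_add_sqrt {a b : ℝ} (hb : 0 ≤ b) : √(a ^ 2 + b) ≤ |a| + √b := by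
  rw [Real.sqrt_le_iff]
  refine ⟨by positivity, ?_⟩
  nlinarith [sq_abs a, Real.sq_sqrt hb, abs_nonneg a, Real.sqrt_nonneg b]

lemma sqrt_sum_sq_le_abs_add_sqrt_sum_sq_sub (x : ι → ℝ) (j : ι) :
    √(∑ i, x i ^ 2) ≤ |x j| + √(∑ i, x i ^ 2 - x j ^ 2) := by
  simpa only [add_sub_cancel] using
    sqrt_add_le_abs_add_sqrt (a := x j) (sub_nonneg.mpr (sq_le_sum_sq x j))

theorem stmt_18 (n : ℕ) (fu fv fm : Fin n → ℝ) (H : Fin n) (α K : ℝ)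
    (hα : 0 < α)
    (hu0 : ∀ i, 0 ≤ fu i)
    (huv : ∀ i, fu i ≤ fv i)
    (hvm : ∀ i, fv i ≤ fm i)
    (hgrow : α * Real.sqrt (∑ i, fm i ^ 2) ≤
      Real.sqrt (∑ i, fv i ^ 2) - Real.sqrt (∑ i, fu i ^ 2))
    (hheavy : K * Real.sqrt ((∑ i, fm i ^ 2) - fm H ^ 2) ≤ fm H)
    (hKα : 2 ≤ K * α) :
    (K * α / 2) * Real.sqrt ((∑ i, fm i ^ 2) - fm H ^ 2) ≤ fv H - fu H := by
  have hinc_le : ∀ i, |fv i - fu i| ≤ |fm i| := fun i ↦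
    abs_le_abs (by linarith [hu0 i, hvm i]) (by linarith [hu0 i, huv i, hvm i])
  have hinc_le_head_tail :
      √(∑ i, (fv i - fu i) ^ 2) ≤ (fv H - fu H) + √(∑ i, fm i ^ 2 - fm H ^ 2) :=
    calc √(∑ i, (fv i - fu i) ^ 2)
        ≤ |fv H - fu H| + √(∑ i, (fv i - fu i) ^ 2 - (fv H - fu H) ^ 2) :=
          sqrt_sum_sq_le_abs_add_sqrt_sum_sq_sub (fun i ↦ fv i - fu i) H
      _ ≤ (fv H - fu H) + √(∑ i, fm i ^ 2 - fm H ^ 2) := by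
          rw [abs_of_nonneg (sub_nonneg.mpr (huv H))]
          exact add_le_add_right (Real.sqrt_le_sqrt (sum_sq_sub_sq_le_of_abs_le hinc_le H)) _
  have hhead_le : fm H ≤ √(∑ i, fm i ^ 2) := Real.le_sqrt_of_sq_le (sq_le_sum_sq fm H)
  linarith [sqrt_sum_sq_sub_sqrt_sum_sq_le fv fu, mul_le_mul_of_nonneg_left hheavy hα.le,
    mul_le_mul_of_nonneg_left hhead_le hα.le,
    mul_nonneg (sub_nonneg.mpr hKα) (Real.sqrt_nonneg (∑ i, fm i ^ 2 - fm H ^ 2))]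
end
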